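/- arXiv:2303.09897 — 3 statements merged into one kernel-verified Lean document; each statement's English description precedes it below -/
import Mathlib

section
/- Let M be the adjacency matrix of a finite tree on N vertices weighted with antagonistic interactions: M_ii = 0 for all i, M_ij ≠ 0 if and only if {i,j} is an edge of the tree, and M_ij·M_ji < 0 for every edge {i,j}. Then there exists a positive diagonal matrix η such that M^T = −η M η^{−1}; consequently every eigenvalue of M is purely imaginary. -/
open Matrix

lemma tree_darts_step' {V : Type*} [DecidableEq V] {G : SimpleGraph V} (hG : G.IsAcyclic)
    {root i j : V} (pi : G.Path root i) (pj : G.Path root j) (h : G.Adj i j) :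
    (pj : G.Walk root j).darts = (pi : G.Walk root i).darts ++ [⟨(i, j), h⟩] ∨
    (pi : G.Walk root i).darts = (pj : G.Walk root j).darts ++ [⟨(j, i), h.symm⟩] := by
  by_cases hj : j ∈ (pi : G.Walk root i).support
  · right
    have hq : ((pi : G.Walk root i).takeUntil j hj).IsPath := pi.2.takeUntil hj
    have hr : ((pi : G.Walk root i).dropUntil j hj).IsPath := pi.2.dropUntil hj
    have hqe : ((⟨_, hq⟩ : G.Path root j) : G.Walk root j) = (pj : G.Walk root j) :=
      congrArg Subtype.val (hG.path_unique _ _)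
    have hsingle : (SimpleGraph.Walk.cons h.symm SimpleGraph.Walk.nil : G.Walk j i).IsPath := by
      simp [SimpleGraph.Walk.cons_isPath_iff, h.ne']
    have hre : ((pi : G.Walk root i).dropUntil j hj) = SimpleGraph.Walk.cons h.symm SimpleGraph.Walk.nil :=
      congrArg Subtype.val (hG.path_unique (⟨_, hr⟩ : G.Path j i) ⟨_, hsingle⟩)
    calc (pi : G.Walk root i).darts
        = ((pi : G.Walk root i).takeUntil j hj).darts
            ++ ((pi : G.Walk root i).dropUntil j hj).darts := by
          rw [← SimpleGraph.Walk.darts_append, (pi : G.Walk root i).take_spec hj]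
      _ = (pj : G.Walk root j).darts ++ [⟨(j, i), h.symm⟩] := by
          rw [hre]; simp only [SimpleGraph.Walk.darts_cons, SimpleGraph.Walk.darts_nil]
          rw [← hqe]
  · left
    have hpath : ((pi : G.Walk root i).concat h).IsPath := by
      rw [← SimpleGraph.Walk.isPath_reverse_iff, SimpleGraph.Walk.reverse_concat,
        SimpleGraph.Walk.cons_isPath_iff]
      refine ⟨(SimpleGraph.Walk.isPath_reverse_iff _).2 pi.2, ?_⟩
      rwa [SimpleGraph.Walk.support_reverse, List.mem_reverse]
    have := congrArg Subtype.val (hG.path_unique (⟨_, hpath⟩ : G.Path root j) pj)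
    rw [← this, SimpleGraph.Walk.darts_concat, List.concat_eq_append]

lemma exists_eta' {N : ℕ} (G : SimpleGraph (Fin N)) (hG : G.IsTree)
    (M : Matrix (Fin N) (Fin N) ℝ)
    (hant : ∀ i j : Fin N, G.Adj i j → M i j * M j i < 0) :
    ∃ η : Fin N → ℝ, (∀ i, 0 < η i) ∧ ∀ i j, G.Adj i j → η j * M j i = -(η i * M i j) := by
  classical
  obtain ⟨root⟩ : Nonempty (Fin N) := hG.1.nonempty
  have hp : ∀ i : Fin N, G.Path root i := fun i =>
    (Classical.choice (hG.1.preconnected root i)).toPath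
  refine ⟨fun i => (((hp i : G.Walk root i)).darts.map
      (fun d => -(M d.fst d.snd / M d.snd d.fst))).prod, ?_, ?_⟩
  · intro i
    apply List.prod_pos
    intro x hx
    obtain ⟨d, hd, rfl⟩ := List.mem_map.1 hx
    have h1 := hant _ _ d.adj
    rcases mul_neg_iff.1 h1 with ⟨ha, hb⟩ | ⟨ha, hb⟩
    · have := div_neg_of_pos_of_neg ha hb; linarith
    · have := div_neg_of_neg_of_pos ha hb; linarith
  · intro i j h
    have h0 := hant i j h
    have h1 : M i j ≠ 0 := by intro h'; rw [h'] at h0; simp at h0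
    have h2 : M j i ≠ 0 := by intro h'; rw [h'] at h0; simp at h0
    dsimp only
    rcases tree_darts_step' hG.2 (hp i) (hp j) h with hc | hc
    · rw [hc]
      simp only [List.map_append, List.prod_append, List.map_cons, List.map_nil,
        List.prod_cons, List.prod_nil, mul_one]
      field_simp
    · rw [hc]
      simp only [List.map_append, List.prod_append, List.map_cons, List.map_nil,
        List.prod_cons, List.prod_nil, mul_one]
      field_simp

/-- The adjacency matrix of a tree weighted with antagonistic interactions is strictly
quasi-antisymmetric via a positive diagonal matrix `η`, and consequently all of its
eigenvalues are purely imaginary. -/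
theorem stmt5 (N : ℕ) (G : SimpleGraph (Fin N)) (hG : G.IsTree)
    (M : Matrix (Fin N) (Fin N) ℝ)
    (hdiag : ∀ i, M i i = 0)
    (hadj : ∀ i j : Fin N, i ≠ j → (M i j ≠ 0 ↔ G.Adj i j))
    (hant : ∀ i j : Fin N, G.Adj i j → M i j * M j i < 0) :
    (∃ η : Fin N → ℝ, (∀ i, 0 < η i) ∧
      Mᵀ = -((Matrix.diagonal η) * M * (Matrix.diagonal η)⁻¹)) ∧
    ∀ (μ : ℂ) (v : Fin N → ℂ), v ≠ 0 →
      (M.map Complex.ofReal) *ᵥ v = μ • v → μ.re = 0 := by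
  classical
  obtain ⟨η, hpos, key⟩ := exists_eta' G hG M hant
  have key' : ∀ i j, η j * M j i = -(η i * M i j) := by
    intro i j
    by_cases hij : i = j
    · subst hij; simp [hdiag]
    · by_cases ha : G.Adj i j
      · exact key i j ha
      · have h1 : M i j = 0 := by
          by_contra h0; exact ha ((hadj i j hij).1 h0)
        have h2 : M j i = 0 := by
          by_contra h0; exact ha (((hadj j i (Ne.symm hij)).1 h0).symm)
        simp [h1, h2]
  have hinv : (diagonal η)⁻¹ = diagonal (fun i => (η i)⁻¹) := by
    apply Matrix.inv_eq_right_inv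
    rw [diagonal_mul_diagonal, ← diagonal_one]
    exact congrArg diagonal (funext fun i => mul_inv_cancel₀ (hpos i).ne')
  constructor
  · refine ⟨η, hpos, ?_⟩
    rw [hinv]
    ext i j
    simp only [transpose_apply, Matrix.neg_apply, mul_diagonal, diagonal_mul]
    have hk := key' i j
    have hj0 : η j ≠ 0 := (hpos j).ne'
    field_simp
    linarith [key' i j]
  · intro μ v hv heig
    have hmv : ∀ i, (∑ j, (M i j : ℂ) * v j) = μ * v i := fun i => by
      have h := congrFun heig i
      simpa [Matrix.mulVec, dotProduct, Matrix.map_apply] using h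
    set T : ℝ := ∑ i, η i * Complex.normSq (v i) with hTdef
    have hT : 0 < T := by
      obtain ⟨i0, hi0⟩ := Function.ne_iff.1 hv
      have hi0' : v i0 ≠ 0 := hi0
      exact Finset.sum_pos'
        (fun i _ => mul_nonneg (hpos i).le (Complex.normSq_nonneg _))
        ⟨i0, Finset.mem_univ _, mul_pos (hpos i0) (Complex.normSq_pos.2 hi0')⟩
    set S : ℂ := ∑ i, ∑ j, (η i : ℂ) * (starRingEnd ℂ) (v i) * (M i j : ℂ) * v j with hSdef
    have main : S = μ * (T : ℂ) := by
      rw [hSdef]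
      calc (∑ i, ∑ j, (η i : ℂ) * (starRingEnd ℂ) (v i) * (M i j : ℂ) * v j)
          = ∑ i, (η i : ℂ) * (starRingEnd ℂ) (v i) * (∑ j, (M i j : ℂ) * v j) := by
            refine Finset.sum_congr rfl fun i _ => ?_
            rw [Finset.mul_sum]
            exact Finset.sum_congr rfl fun j _ => by ring
        _ = ∑ i, μ * ((η i : ℂ) * ((Complex.normSq (v i) : ℝ) : ℂ)) := by
            refine Finset.sum_congr rfl fun i _ => ?_
            rw [hmv i]
            linear_combination μ * (η i : ℂ) * (Complex.mul_conj (v i))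
        _ = μ * (T : ℂ) := by
            rw [← Finset.mul_sum, hTdef]
            push_cast
            ring
    have hcon : (starRingEnd ℂ) S = -S := by
      rw [hSdef]
      calc (starRingEnd ℂ) (∑ i, ∑ j, (η i : ℂ) * (starRingEnd ℂ) (v i) * (M i j : ℂ) * v j)
          = ∑ i, ∑ j, (η i : ℂ) * (v i) * (M i j : ℂ) * (starRingEnd ℂ) (v j) := by
            rw [map_sum]
            refine Finset.sum_congr rfl fun i _ => ?_
            rw [map_sum]
            refine Finset.sum_congr rfl fun j _ => ?_
            simp [Complex.conj_ofReal]
        _ = ∑ i, ∑ j, (η j : ℂ) * (v j) * (M j i : ℂ) * (starRingEnd ℂ) (v i) :=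
            Finset.sum_comm
        _ = -(∑ i, ∑ j, (η i : ℂ) * (starRingEnd ℂ) (v i) * (M i j : ℂ) * v j) := by
            rw [← Finset.sum_neg_distrib]
            refine Finset.sum_congr rfl fun i _ => ?_
            rw [← Finset.sum_neg_distrib]
            refine Finset.sum_congr rfl fun j _ => ?_
            have hk : ((η j : ℝ) * M j i : ℝ) = -((η i : ℝ) * M i j) := key' i j
            have hkC : (η j : ℂ) * (M j i : ℂ) = -((η i : ℂ) * (M i j : ℂ)) := by
              exact_mod_cast congrArg (fun x : ℝ => (x : ℂ)) hk
            linear_combination (v j * (starRingEnd ℂ) (v i)) * hkC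
    have hre : S.re = 0 := by
      have h1 := congrArg Complex.re hcon
      rw [Complex.conj_re, Complex.neg_re] at h1
      linarith
    have hre2 : S.re = μ.re * T := by
      rw [main]
      simp [Complex.mul_re]
    rw [hre2] at hre
    rcases mul_eq_zero.1 hre with h | h
    · exact h
    · exact absurd h hT.ne'
end

section
/- Let M be the adjacency matrix of a tree weighted with antagonistic interactions (M_ii = 0, M_ij ≠ 0 iff {i,j} is a tree edge, M_ij·M_ji < 0 for edges) and let D be a diagonal matrix with nonnegative entries. Then every complex eigenvalue λ of M − D satisfies Re(λ) ≤ 0. -/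
open Matrix

namespace Stmt9Aux

noncomputable def wt {N : ℕ} (M : Matrix (Fin N) (Fin N) ℝ) {G : SimpleGraph (Fin N)} :
    ∀ {a b : Fin N}, G.Walk a b → ℝ
  | _, _, SimpleGraph.Walk.nil => 1
  | _, _, @SimpleGraph.Walk.cons _ _ a c _ h p => -(M a c / M c a) * wt M p

lemma wt_pos {N : ℕ} {M : Matrix (Fin N) (Fin N) ℝ} {G : SimpleGraph (Fin N)}
    (hant : ∀ i j : Fin N, G.Adj i j → M i j * M j i < 0)
    {a b : Fin N} (p : G.Walk a b) : 0 < wt M p := by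
  induction p with
  | nil => norm_num [wt]
  | cons h p ih =>
    rename_i u c w
    have h1 : M u c / M c u < 0 := by
      rcases mul_neg_iff.1 (hant u c h) with ⟨h1, h2⟩ | ⟨h1, h2⟩
      · exact div_neg_of_pos_of_neg h1 h2
      · exact div_neg_of_neg_of_pos h1 h2
    have : (0:ℝ) < -(M u c / M c u) := by linarith
    simpa [wt] using mul_pos this ih

lemma wt_append {N : ℕ} {M : Matrix (Fin N) (Fin N) ℝ} {G : SimpleGraph (Fin N)}
    {a b c : Fin N} (p : G.Walk a b) (q : G.Walk b c) :
    wt M (p.append q) = wt M p * wt M q := by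
  induction p with
  | nil => simp [wt]
  | cons h p ih => simp [wt, ih]; ring

lemma wt_concat {N : ℕ} {M : Matrix (Fin N) (Fin N) ℝ} {G : SimpleGraph (Fin N)}
    {a b c : Fin N} (p : G.Walk a b) (h : G.Adj b c) :
    wt M (p.concat h) = wt M p * (-(M b c / M c b)) := by
  rw [SimpleGraph.Walk.concat_eq_append, wt_append]
  simp [wt]

end Stmt9Aux

/-- If `M` is the adjacency matrix of an antagonistic tree and `D` is diagonal with
nonnegative entries, then every complex eigenvalue of `M - D` has nonpositive real part. -/
theorem stmt9 (N : ℕ) (G : SimpleGraph (Fin N)) (hG : G.IsTree)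
    (M : Matrix (Fin N) (Fin N) ℝ)
    (hdiag : ∀ i, M i i = 0)
    (hadj : ∀ i j : Fin N, i ≠ j → (M i j ≠ 0 ↔ G.Adj i j))
    (hant : ∀ i j : Fin N, G.Adj i j → M i j * M j i < 0)
    (d : Fin N → ℝ) (hd : ∀ i, 0 ≤ d i) :
    ∀ (μ : ℂ) (v : Fin N → ℂ), v ≠ 0 →
      ((M - Matrix.diagonal d).map Complex.ofReal) *ᵥ v = μ • v → μ.re ≤ 0 := by
  intro μ v hv heig
  classical
  have hne : Nonempty (Fin N) := by
    by_contra h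
    exact hv (funext fun i => absurd ⟨i⟩ h)
  obtain ⟨r⟩ := hne
  have hconn := hG.isConnected.preconnected
  set q : Fin N → ℝ :=
    fun i => Stmt9Aux.wt M (((hconn r i).some.toPath : G.Path r i) : G.Walk r i) with hqdef
  have hqpos : ∀ i, 0 < q i := fun i => Stmt9Aux.wt_pos hant _
  have hpath : ∀ (i : Fin N) (p : G.Walk r i), p.IsPath → q i = Stmt9Aux.wt M p := by
    intro i p hp
    have h2 := hG.IsAcyclic.path_unique ((hconn r i).some.toPath) ⟨p, hp⟩
    rw [hqdef]
    simp only [h2]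
  have hMne : ∀ i j : Fin N, G.Adj i j → M i j ≠ 0 := by
    intro i j hij
    exact fun h0 => absurd (hant i j hij) (by rw [h0]; simp)
  -- key edge relation
  have hq : ∀ i j : Fin N, G.Adj i j → q i * M i j = -(q j * M j i) := by
    intro i j hij
    set P : G.Path r i := (hconn r i).some.toPath with hP
    have hqi : q i = Stmt9Aux.wt M (P : G.Walk r i) := rfl
    by_cases hj : j ∈ (P : G.Walk r i).support
    · have hsplit := ((P : G.Walk r i).take_spec hj).symm
      have h1 : ((P : G.Walk r i).takeUntil j hj).IsPath := P.2.takeUntil hj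
      have h2 : ((P : G.Walk r i).dropUntil j hj).IsPath := P.2.dropUntil hj
      have hed : (SimpleGraph.Walk.cons hij.symm SimpleGraph.Walk.nil : G.Walk j i).IsPath := by
        simp [SimpleGraph.Walk.cons_isPath_iff, SimpleGraph.Walk.IsPath.nil,
          (G.ne_of_adj hij.symm)]
      have hdrop : (P : G.Walk r i).dropUntil j hj
          = SimpleGraph.Walk.cons hij.symm SimpleGraph.Walk.nil := by
        have := hG.IsAcyclic.path_unique ⟨_, h2⟩ ⟨_, hed⟩
        exact congrArg Subtype.val this
      have hqj : q j = Stmt9Aux.wt M ((P : G.Walk r i).takeUntil j hj) := hpath j _ h1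
      have : q i = q j * (-(M j i / M i j)) := by
        rw [hqi, hsplit, Stmt9Aux.wt_append, hdrop, hqj]
        simp [Stmt9Aux.wt]
      have h0 : M i j ≠ 0 := hMne i j hij
      rw [this]
      field_simp
    · have hconcat : ((P : G.Walk r i).concat hij).IsPath := by
        rw [← SimpleGraph.Walk.isPath_reverse_iff, SimpleGraph.Walk.reverse_concat,
          SimpleGraph.Walk.cons_isPath_iff]
        refine ⟨(SimpleGraph.Walk.isPath_reverse_iff _).2 P.2, ?_⟩
        rwa [SimpleGraph.Walk.support_reverse, List.mem_reverse]
      have hqj : q j = q i * (-(M i j / M j i)) := by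
        rw [hpath j _ hconcat, Stmt9Aux.wt_concat, hqi]
      have h0 : M j i ≠ 0 := hMne j i hij.symm
      rw [hqj]
      field_simp
  -- analytic part
  set f : Fin N → Fin N → ℝ := fun i j => ((starRingEnd ℂ) (v i) * v j).re with hfdef
  have hfsymm : ∀ i j, f i j = f j i := by
    intro i j
    simp [hfdef, Complex.mul_re]
    ring
  have hfii : ∀ i, f i i = Complex.normSq (v i) := by
    intro i
    simp [hfdef, Complex.mul_re, Complex.normSq_apply]
  have key : ∀ i, (∑ j, M i j * f i j) - d i * f i i = μ.re * f i i := by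
    intro i
    have h1 := congrFun heig i
    have h2 : (∑ j, (M i j - Matrix.diagonal d i j : ℂ) * v j) = μ * v i := by
      simpa [Matrix.mulVec, Matrix.map_apply, dotProduct] using h1
    have h3 : (starRingEnd ℂ) (v i) * (∑ j, (M i j - Matrix.diagonal d i j : ℂ) * v j)
        = μ * ((starRingEnd ℂ) (v i) * v i) := by rw [h2]; ring
    have h4 := congrArg Complex.re h3
    rw [Finset.mul_sum, Complex.re_sum] at h4
    have h5 : ∀ j, ((starRingEnd ℂ) (v i) * ((M i j - Matrix.diagonal d i j : ℂ) * v j)).re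
        = (M i j - Matrix.diagonal d i j) * f i j := by
      intro j
      have : (starRingEnd ℂ) (v i) * ((M i j - Matrix.diagonal d i j : ℂ) * v j)
          = ((M i j - Matrix.diagonal d i j : ℝ) : ℂ) * ((starRingEnd ℂ) (v i) * v j) := by
        push_cast; ring
      rw [this, hfdef]
      simp [Complex.mul_re]
    rw [Finset.sum_congr rfl (fun j _ => h5 j)] at h4
    have h6 : (μ * ((starRingEnd ℂ) (v i) * v i)).re = μ.re * f i i := by
      rw [hfii i]
      have : (starRingEnd ℂ) (v i) * v i = (Complex.normSq (v i) : ℂ) := by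
        rw [mul_comm]; exact Complex.mul_conj (v i)
      rw [this]
      simp [Complex.mul_re]
    rw [h6] at h4
    rw [← h4]
    have hexp : ∀ j, (M i j - Matrix.diagonal d i j) * f i j
        = M i j * f i j - Matrix.diagonal d i j * f i j := fun j => by ring
    rw [Finset.sum_congr rfl (fun j _ => hexp j), Finset.sum_sub_distrib]
    congr 1
    rw [Fintype.sum_eq_single i]
    · simp [Matrix.diagonal]
    · intro j hj
      simp [Matrix.diagonal_apply_ne d (Ne.symm hj)]
  -- weighted sum
  have keysum : (∑ i, ∑ j, q i * (M i j * f i j)) - ∑ i, q i * (d i * f i i)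
      = μ.re * ∑ i, q i * f i i := by
    rw [Finset.mul_sum, ← Finset.sum_sub_distrib]
    refine Finset.sum_congr rfl (fun i _ => ?_)
    rw [← Finset.mul_sum, ← mul_sub, key i]
    ring
  have hanti : ∀ i j, q i * (M i j * f i j) = -(q j * (M j i * f j i)) := by
    intro i j
    by_cases hij : G.Adj i j
    · have := hq i j hij
      rw [hfsymm i j]
      linear_combination f j i * this
    · by_cases hij' : i = j
      · subst hij'; simp [hdiag i]
      · have h1 : M i j = 0 := by
          by_contra h; exact hij ((hadj i j hij').1 h)
        have h2 : M j i = 0 := by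
          by_contra h; exact hij (G.adj_symm ((hadj j i (Ne.symm hij')).1 h))
        simp [h1, h2]
  have hT : (∑ i, ∑ j, q i * (M i j * f i j)) = 0 := by
    have h1 : (∑ i, ∑ j, q i * (M i j * f i j))
        = -(∑ i, ∑ j, q j * (M j i * f j i)) := by
      rw [← Finset.sum_neg_distrib]
      refine Finset.sum_congr rfl (fun i _ => ?_)
      rw [← Finset.sum_neg_distrib]
      exact Finset.sum_congr rfl (fun j _ => hanti i j)
    have h2 : (∑ i, ∑ j, q i * (M i j * f i j))
        = ∑ j, ∑ i, q i * (M i j * f i j) := Finset.sum_comm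
    linarith
  have hS : 0 < ∑ i, q i * f i i := by
    obtain ⟨i, hi⟩ := Function.ne_iff.1 hv
    refine Finset.sum_pos' (fun j _ => ?_) ⟨i, Finset.mem_univ i, ?_⟩
    · rw [hfii j]; exact mul_nonneg (hqpos j).le (Complex.normSq_nonneg _)
    · rw [hfii i]
      exact mul_pos (hqpos i) (by simpa [Complex.normSq_pos] using hi)
  have hDsum : 0 ≤ ∑ i, q i * (d i * f i i) := by
    refine Finset.sum_nonneg (fun i _ => ?_)
    rw [hfii i]
    exact mul_nonneg (hqpos i).le (mul_nonneg (hd i) (Complex.normSq_nonneg _))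
  rw [hT] at keysum
  nlinarith
end

section
/- Let M be the adjacency matrix of an antagonistic tree and D a real diagonal matrix with entries D_1,...,D_N ∈ ℝ (arbitrary signs). Then every complex eigenvalue λ of M − D satisfies Re(λ) ≤ −min_i D_i. -/
open Matrix

namespace Stmt10Aux

variable {V : Type*} {G : SimpleGraph V}

/-- Product of edge ratios along a walk. -/
noncomputable def Wt (M : Matrix V V ℝ) : ∀ {a b : V}, G.Walk a b → ℝ
  | _, _, .nil => 1
  | a, _, .cons (v := c) _ p => (M a c / (- M c a)) * Wt M p

@[simp] lemma Wt_nil (M : Matrix V V ℝ) {a : V} : Wt M (.nil : G.Walk a a) = 1 := rfl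

@[simp] lemma Wt_cons (M : Matrix V V ℝ) {a c b : V} (h : G.Adj a c) (p : G.Walk c b) :
    Wt M (.cons h p) = (M a c / (- M c a)) * Wt M p := rfl

lemma Wt_append (M : Matrix V V ℝ) {a b c : V} (p : G.Walk a b) (q : G.Walk b c) :
    Wt M (p.append q) = Wt M p * Wt M q := by
  induction p with
  | nil => simp
  | cons h p ih => simp [ih, mul_assoc]

lemma ratio_pos {M : Matrix V V ℝ} {a c : V}
    (h : M a c * M c a < 0) : 0 < M a c / (- M c a) := by
  have h1 : 0 < M a c * (- M c a) := by nlinarith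
  rcases mul_pos_iff.mp h1 with ⟨ha, hb⟩ | ⟨ha, hb⟩
  · exact div_pos ha hb
  · exact div_pos_of_neg_of_neg ha hb

lemma Wt_pos {M : Matrix V V ℝ}
    (hant : ∀ i j : V, G.Adj i j → M i j * M j i < 0)
    {a b : V} (p : G.Walk a b) : 0 < Wt M p := by
  induction p with
  | nil => simp
  | cons h p ih => exact mul_pos (ratio_pos (hant _ _ h)) ih

/-- Existence of positive weights that antisymmetrize `M` on a tree. -/
lemma exists_weight {V : Type*} [DecidableEq V] {G : SimpleGraph V} (hG : G.IsTree)
    (M : Matrix V V ℝ)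
    (hant : ∀ i j : V, G.Adj i j → M i j * M j i < 0)
    (r : V) :
    ∃ w : V → ℝ, (∀ i, 0 < w i) ∧
      ∀ i j : V, G.Adj i j → w i * M i j = - (w j * M j i) := by
  classical
  have hconn := hG.isConnected.preconnected
  set p : ∀ i : V, G.Path r i := fun i => (hconn r i).some.toPath with hp
  refine ⟨fun i => Wt M (p i : G.Walk r i), fun i => Wt_pos hant _, ?_⟩
  have key : ∀ i j : V, G.Adj i j → j ∈ (p i : G.Walk r i).support →
      Wt M (p i : G.Walk r i) * M i j = - (Wt M (p j : G.Walk r j) * M j i) := by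
    intro i j h hj
    have hP : (p i : G.Walk r i).IsPath := (p i).2
    set q := (p i : G.Walk r i).takeUntil j hj with hq
    set e := (p i : G.Walk r i).dropUntil j hj with he
    have hqP : q.IsPath := hP.takeUntil hj
    have heP : e.IsPath := hP.dropUntil hj
    have hne : j ≠ i := h.ne'
    have hsingle : (SimpleGraph.Walk.cons h.symm .nil : G.Walk j i).IsPath := by
      refine SimpleGraph.Walk.IsPath.cons SimpleGraph.Walk.IsPath.nil ?_
      simp [hne]
    have heq : e = SimpleGraph.Walk.cons h.symm .nil := by
      have := hG.IsAcyclic.path_unique ⟨e, heP⟩ ⟨_, hsingle⟩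
      exact congrArg Subtype.val this
    have hqj : Wt M (p j : G.Walk r j) = Wt M q := by
      have := hG.IsAcyclic.path_unique (p j) ⟨q, hqP⟩
      rw [this]
    have hspec : Wt M (p i : G.Walk r i) = Wt M q * (M j i / (- M i j)) := by
      conv_lhs => rw [← (p i : G.Walk r i).take_spec hj]
      rw [Wt_append, ← hq, ← he, heq]
      simp
    have hMij : M i j ≠ 0 := by
      intro h0
      have := hant i j h
      rw [h0] at this
      simp at this
    rw [hspec, hqj]
    have hx : M j i / -M i j * M i j = -M j i := by
      field_simp
    rw [mul_assoc, hx]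
    ring
  intro i j h
  by_cases hj : j ∈ (p i : G.Walk r i).support
  · exact key i j h hj
  · have hi : i ∈ (p j : G.Walk r j).support := by
      by_contra hi
      -- then (p i).concat h is a path from r to j, so p j = it, and i ∈ support
      have hP : (p i : G.Walk r i).IsPath := (p i).2
      have hcp : ((p i : G.Walk r i).concat h).IsPath := by
        rw [← SimpleGraph.Walk.isPath_reverse_iff, SimpleGraph.Walk.reverse_concat]
        refine SimpleGraph.Walk.IsPath.cons ?_ ?_
        · rwa [SimpleGraph.Walk.isPath_reverse_iff]
        · simpa [SimpleGraph.Walk.support_reverse] using hj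
      have := hG.IsAcyclic.path_unique (p j) ⟨_, hcp⟩
      apply hi
      rw [this]
      simp [SimpleGraph.Walk.concat_eq_append, SimpleGraph.Walk.mem_support_append_iff]
    have := key j i h.symm hi
    linarith
  
end Stmt10Aux

/-- If `M` is the adjacency matrix of an antagonistic tree and `D = diag(D₁,...,D_N)`
with arbitrary real entries, then every complex eigenvalue `λ` of `M - D` satisfies
`Re λ ≤ -min_i D_i`. -/
theorem stmt10 (N : ℕ) (hN : 0 < N) (G : SimpleGraph (Fin N)) (hG : G.IsTree)
    (M : Matrix (Fin N) (Fin N) ℝ)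
    (hdiag : ∀ i, M i i = 0)
    (hadj : ∀ i j : Fin N, i ≠ j → (M i j ≠ 0 ↔ G.Adj i j))
    (hant : ∀ i j : Fin N, G.Adj i j → M i j * M j i < 0)
    (d : Fin N → ℝ) :
    ∀ (μ : ℂ) (v : Fin N → ℂ), v ≠ 0 →
      ((M - Matrix.diagonal d).map Complex.ofReal) *ᵥ v = μ • v →
        μ.re ≤ -(Finset.univ.inf' ⟨⟨0, hN⟩, Finset.mem_univ _⟩ d) := by
  classical
  intro μ v hv heig
  obtain ⟨w, hwpos, hw⟩ := Stmt10Aux.exists_weight hG M hant ⟨0, hN⟩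
  -- antisymmetry for all pairs
  have hall : ∀ i j : Fin N, w j * M j i = -(w i * M i j) := by
    intro i j
    by_cases hij : i = j
    · subst hij; simp [hdiag]
    · by_cases hA : G.Adj i j
      · have := hw i j hA; linarith
      · have h1 : M i j = 0 := by
          by_contra h0
          exact hA ((hadj i j hij).mp h0)
        have h2 : M j i = 0 := by
          by_contra h0
          exact hA (((hadj j i (Ne.symm hij)).mp h0).symm)
        simp [h1, h2]
  set m := Finset.univ.inf' ⟨⟨0, hN⟩, Finset.mem_univ _⟩ d with hm
  set n : Fin N → ℝ := fun i => Complex.normSq (v i) with hn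
  set S : ℝ := ∑ i, w i * n i with hS
  have hSpos : 0 < S := by
    obtain ⟨i, hi⟩ := Function.ne_iff.mp hv
    refine Finset.sum_pos' (fun j _ => mul_nonneg (hwpos j).le (Complex.normSq_nonneg _))
      ⟨i, Finset.mem_univ i, ?_⟩
    exact mul_pos (hwpos i) (by simpa [hn, Complex.normSq_pos] using hi)
  -- the sesquilinear sum
  set T : ℂ := ∑ i, ∑ j, ((w i * M i j : ℝ) : ℂ) * (starRingEnd ℂ) (v i) * v j with hT
  have hTre : T.re = 0 := by
    have hconj : (starRingEnd ℂ) T = -T := by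
      rw [hT, map_sum]
      simp_rw [map_sum, _root_.map_mul, Complex.conj_ofReal, Complex.conj_conj]
      rw [Finset.sum_comm, ← Finset.sum_neg_distrib]
      refine Finset.sum_congr rfl fun j _ => ?_
      rw [← Finset.sum_neg_distrib]
      refine Finset.sum_congr rfl fun i _ => ?_
      rw [show ((w i * M i j : ℝ) : ℂ) = -((w j * M j i : ℝ) : ℂ) by
        rw [hall j i]; push_cast; ring]
      ring
    have hac := Complex.add_conj T
    rw [hconj] at hac
    have h0 : ((2 * T.re : ℝ) : ℂ) = 0 := by rw [← hac]; ring
    have h2 : (2 * T.re : ℝ) = 0 := by exact_mod_cast h0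
    linarith
  -- evaluate the quadratic form two ways
  set E : ℂ := ∑ i, ((w i : ℝ) : ℂ) * (starRingEnd ℂ) (v i) *
      ((((M - Matrix.diagonal d).map Complex.ofReal) *ᵥ v) i) with hE
  have hE1 : E = μ * (S : ℂ) := by
    rw [hE]
    have : ∀ i, (((M - Matrix.diagonal d).map Complex.ofReal) *ᵥ v) i = μ * v i := by
      intro i; rw [heig]; simp [Pi.smul_apply]
    simp_rw [this]
    rw [hS]
    push_cast
    rw [Finset.mul_sum]
    refine Finset.sum_congr rfl fun i _ => ?_
    have : (starRingEnd ℂ) (v i) * v i = (n i : ℂ) := by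
      rw [hn]; exact (Complex.normSq_eq_conj_mul_self).symm
    calc ((w i : ℝ) : ℂ) * (starRingEnd ℂ) (v i) * (μ * v i)
        = μ * (((w i : ℝ) : ℂ) * ((starRingEnd ℂ) (v i) * v i)) := by ring
      _ = μ * ((w i : ℂ) * (n i : ℂ)) := by rw [this]
  have hE2 : E = T - ∑ i, ((w i * d i : ℝ) : ℂ) * (n i : ℂ) := by
    rw [hE, hT]
    rw [← Finset.sum_sub_distrib]
    refine Finset.sum_congr rfl fun i _ => ?_
    have hmv : (((M - Matrix.diagonal d).map Complex.ofReal) *ᵥ v) i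
        = (∑ j, ((M i j : ℝ) : ℂ) * v j) - ((d i : ℝ) : ℂ) * v i := by
      simp only [Matrix.mulVec, Matrix.map_apply, Matrix.sub_apply, dotProduct]
      rw [show (∑ j, ((((M i j - Matrix.diagonal d i j : ℝ)) : ℂ)) * v j)
          = ∑ j, (((M i j : ℝ) : ℂ) * v j - ((Matrix.diagonal d i j : ℝ) : ℂ) * v j) from
        Finset.sum_congr rfl fun j _ => by push_cast; ring]
      rw [Finset.sum_sub_distrib]
      congr 1
      rw [Finset.sum_eq_single i]
      · simp [Matrix.diagonal]
      · intro j _ hji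
        simp [Matrix.diagonal_apply_ne' d hji]
      · simp
    rw [hmv]
    rw [mul_sub, Finset.mul_sum]
    congr 1
    · refine Finset.sum_congr rfl fun j _ => ?_
      push_cast; ring
    · have : (starRingEnd ℂ) (v i) * v i = (n i : ℂ) := by
        rw [hn]; exact (Complex.normSq_eq_conj_mul_self).symm
      push_cast
      calc (w i : ℂ) * (starRingEnd ℂ) (v i) * ((d i : ℂ) * v i)
          = (w i : ℂ) * (d i : ℂ) * ((starRingEnd ℂ) (v i) * v i) := by ring
        _ = (w i : ℂ) * (d i : ℂ) * (n i : ℂ) := by rw [this]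
  have hre : μ.re * S = -∑ i, w i * d i * n i := by
    have h1 : E.re = μ.re * S := by
      rw [hE1]
      simp [Complex.mul_re]
    have h2 : E.re = -∑ i, w i * d i * n i := by
      rw [hE2]
      simp only [Complex.sub_re, hTre, zero_sub]
      congr 1
      rw [show (∑ i, ((w i * d i : ℝ) : ℂ) * (n i : ℂ)) = ((∑ i, w i * d i * n i : ℝ) : ℂ) by
        push_cast; ring_nf]
      exact Complex.ofReal_re _
    linarith
  -- now the inequality
  have hsum : m * S ≤ ∑ i, w i * d i * n i := by
    rw [hS, Finset.mul_sum]
    refine Finset.sum_le_sum fun i _ => ?_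
    have hmi : m ≤ d i := Finset.inf'_le d (Finset.mem_univ i)
    have hnn : 0 ≤ w i * n i := mul_nonneg (hwpos i).le (Complex.normSq_nonneg _)
    calc m * (w i * n i) ≤ d i * (w i * n i) := mul_le_mul_of_nonneg_right hmi hnn
      _ = w i * d i * n i := by ring
  have : μ.re * S ≤ (-m) * S := by
    rw [hre]
    nlinarith
  exact le_of_mul_le_mul_right (by linarith [this]) hSpos
end
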